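/- Let η > 0, τ ≥ 2/η, N ≥ 1, and l₁, …, l_N ∈ [0, 1]. Let z ∈ Δ(N) and define z′ ∈ Δ(N) by z′(i) = (e^{−η·lᵢ}·z(i) + 1/(Nτ)) / Σ_{j=1}^N (e^{−η·lⱼ}·z(j) + 1/(Nτ)). Then ‖z − z′‖ ≤ η. -/
import Mathlib

/-- Total-variation distance between two points of the simplex,
    ‖z − z′‖ = (1/2)·Σᵢ |zᵢ − z′ᵢ|. -/
noncomputable def tv {N : ℕ} (z z' : Fin N → ℝ) : ℝ := (1/2) * ∑ i, |z i - z' i|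

lemma crux_exp (η : ℝ) (h0 : 0 < η) (h1 : η < 1) : Real.exp η * (2 - η) ≤ 2 + η := by
  have hexp : Real.exp η ≤ 1 + η + η^2/2 + η^3 * (2/9) := by
    have hb := Real.exp_bound' h0.le h1.le (n := 3) (by norm_num)
    norm_num [Finset.sum_range_succ, Nat.factorial] at hb
    linarith
  nlinarith [mul_le_mul_of_nonneg_right hexp (show (0:ℝ) ≤ 2 - η by linarith),
    pow_pos h0 3, pow_pos h0 4]

set_option maxHeartbeats 1000000 in
theorem stmt_9 (N : ℕ) (hN : 1 ≤ N) (η τ : ℝ) (hη : 0 < η) (hτ : 2/η ≤ τ)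
    (l : Fin N → ℝ) (hl : ∀ i, l i ∈ Set.Icc (0:ℝ) 1)
    (z : Fin N → ℝ) (hz : z ∈ stdSimplex ℝ (Fin N)) :
    tv z (fun i => (Real.exp (-η * l i) * z i + 1/(N*τ)) /
        ∑ j, (Real.exp (-η * l j) * z j + 1/(N*τ))) ≤ η := by
  obtain ⟨hz0, hz1⟩ := hz
  have hNpos : (0:ℝ) < N := by exact_mod_cast hN
  have hτpos : 0 < τ := lt_of_lt_of_le (by positivity) hτ
  have hτ2 : 1/τ ≤ η/2 := by
    rw [div_le_iff₀ hη] at hτ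
    rw [div_le_div_iff₀ hτpos (by norm_num : (0:ℝ) < 2)]
    linarith
  have hτ0 : 0 < 1/τ := by positivity
  set E : Fin N → ℝ := fun i => Real.exp (-η * l i) with hE
  set c : ℝ := 1/(N*τ) with hc
  have hcpos : 0 < c := by positivity
  set W : ℝ := ∑ j, E j * z j with hW
  set D : ℝ := ∑ j, (E j * z j + c) with hD
  have hDW : D = W + 1/τ := by
    rw [hD, Finset.sum_add_distrib, ← hW, Finset.sum_const, Finset.card_univ,
      Fintype.card_fin, nsmul_eq_mul, hc]
    have : (N:ℝ) * (1/(N*τ)) = 1/τ := by field_simp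
    rw [this]
  -- bounds on E
  have hE1 : ∀ i, E i ≤ 1 := fun i => by
    rw [hE]
    exact Real.exp_le_one_iff.2 (by have := mul_nonneg hη.le (hl i).1; linarith)
  have hElb : ∀ i, Real.exp (-η) ≤ E i := fun i => by
    rw [hE]
    exact Real.exp_le_exp.2 (by have := mul_le_mul_of_nonneg_left (hl i).2 hη.le; linarith)
  have hEpos : ∀ i, 0 < E i := fun i => Real.exp_pos _
  have hW1 : W ≤ 1 := by
    rw [hW, ← hz1]
    exact Finset.sum_le_sum fun i _ => mul_le_of_le_one_left (hz0 i) (hE1 i)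
  have hWlb : Real.exp (-η) ≤ W := by
    calc Real.exp (-η) = ∑ j, Real.exp (-η) * z j := by
          rw [← Finset.mul_sum, hz1, mul_one]
      _ ≤ W := Finset.sum_le_sum fun i _ => mul_le_mul_of_nonneg_right (hElb i) (hz0 i)
  have hWpos : 0 < W := lt_of_lt_of_le (Real.exp_pos _) hWlb
  have hW1η : 1 - η ≤ W := le_trans (by linarith [Real.add_one_le_exp (-η)]) hWlb
  have hDpos : 0 < D := by rw [hDW]; positivity
  -- rewrite tv as sum of positive parts
  set z' : Fin N → ℝ := fun i => (E i * z i + c) / D with hz'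
  have hz'sum : ∑ i, z' i = 1 := by
    rw [hz']
    rw [← Finset.sum_div, ← hD, div_self hDpos.ne']
  have habs : ∀ a : ℝ, |a| = 2 * max a 0 - a := by
    intro a
    rcases le_total a 0 with h | h
    · rw [abs_of_nonpos h, max_eq_right h]; ring
    · rw [abs_of_nonneg h, max_eq_left h]; ring
  have htv : tv z z' = ∑ i, max (z i - z' i) 0 := by
    unfold tv
    have h1 : ∑ i, |z i - z' i| = ∑ i, (2 * max (z i - z' i) 0 - (z i - z' i)) :=
      Finset.sum_congr rfl fun i _ => habs _
    rw [h1, Finset.sum_sub_distrib, Finset.sum_sub_distrib, hz1, hz'sum, ← Finset.mul_sum]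
    ring
  show tv z z' ≤ η
  rw [htv]
  have hz'nonneg : ∀ i, 0 ≤ z' i := fun i => by
    rw [hz']
    exact div_nonneg (add_nonneg (mul_nonneg (hEpos i).le (hz0 i)) hcpos.le) hDpos.le
  rcases le_or_gt 1 η with hη1 | hη1
  · -- trivial case: tv ≤ 1 ≤ η
    calc ∑ i, max (z i - z' i) 0 ≤ ∑ i, z i :=
          Finset.sum_le_sum fun i _ => max_le (by linarith [hz'nonneg i]) (hz0 i)
      _ = 1 := hz1
      _ ≤ η := hη1
  · -- main case
    set P : ℝ := ∑ i, z i * max (W - E i) 0 with hPdef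
    -- key bound P ≤ W * (η/2)
    have hP : P ≤ W * (η/2) := by
      rcases le_total W (1 - η/2) with hWc | hWc
      · -- use max (W - E i) 0 ≤ E i * (exp η * W - 1)
        have hkey : Real.exp η * W - 1 ≤ η/2 := by
          have hcx := crux_exp η hη hη1
          have h₁ := mul_le_mul_of_nonneg_left hWc (Real.exp_pos η).le
          nlinarith [h₁, hcx]
        have h1W : 1 ≤ Real.exp η * W := by
          have := mul_le_mul_of_nonneg_left hWlb (Real.exp_pos η).le
          rwa [← Real.exp_add, add_neg_cancel, Real.exp_zero] at this
        have hPb : P ≤ ∑ i, z i * (E i * (Real.exp η * W - 1)) := by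
          apply Finset.sum_le_sum
          intro i _
          apply mul_le_mul_of_nonneg_left _ (hz0 i)
          apply max_le
          · have hEe : 1 ≤ E i * Real.exp η := by
              rw [hE, ← Real.exp_add]
              apply Real.one_le_exp
              have := mul_le_mul_of_nonneg_left (hl i).2 hη.le
              linarith
            nlinarith [mul_nonneg hWpos.le (sub_nonneg.2 hEe)]
          · exact mul_nonneg (hEpos i).le (by linarith)
        have hkW : ∀ k : ℝ, ∑ i, z i * (E i * k) = k * W := by
          intro k
          rw [hW, Finset.mul_sum]
          exact Finset.sum_congr rfl fun i _ => by ring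
        calc P ≤ ∑ i, z i * (E i * (Real.exp η * W - 1)) := hPb
          _ = (Real.exp η * W - 1) * W := hkW _
          _ ≤ (η/2) * W := mul_le_mul_of_nonneg_right hkey hWpos.le
          _ = W * (η/2) := by ring
      · -- W ≥ 1 - η/2; use P = Q ≤ W * (1 - W)
        have hsum0 : ∑ i, z i * (W - E i) = 0 := by
          have : ∑ i, z i * (W - E i) = (∑ i, z i) * W - ∑ i, E i * z i := by
            rw [Finset.sum_mul]
            rw [← Finset.sum_sub_distrib]
            exact Finset.sum_congr rfl fun i _ => by ring
          rw [this, hz1, ← hW]; ring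
        have hPQ : P = ∑ i, z i * max (E i - W) 0 := by
          have hid : ∀ a : ℝ, max a 0 = max (-a) 0 + a := by
            intro a
            rcases le_total a 0 with h | h
            · rw [max_eq_right h, max_eq_left (by linarith)]; ring
            · rw [max_eq_left h, max_eq_right (by linarith)]; ring
          calc P = ∑ i, (z i * max (E i - W) 0 + z i * (W - E i)) := by
                apply Finset.sum_congr rfl
                intro i _
                have := hid (W - E i)
                rw [neg_sub] at this
                rw [this]; ring
            _ = (∑ i, z i * max (E i - W) 0) + ∑ i, z i * (W - E i) := by
                rw [Finset.sum_add_distrib]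
            _ = ∑ i, z i * max (E i - W) 0 := by rw [hsum0, add_zero]
        rw [hPQ]
        have hQb : ∑ i, z i * max (E i - W) 0 ≤ ∑ i, z i * (E i * (1 - W)) := by
          apply Finset.sum_le_sum
          intro i _
          apply mul_le_mul_of_nonneg_left _ (hz0 i)
          apply max_le
          · nlinarith [mul_nonneg hWpos.le (sub_nonneg.2 (hE1 i))]
          · exact mul_nonneg (hEpos i).le (by linarith)
        have hkW : ∀ k : ℝ, ∑ i, z i * (E i * k) = k * W := by
          intro k
          rw [hW, Finset.mul_sum]
          exact Finset.sum_congr rfl fun i _ => by ring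
        calc ∑ i, z i * max (E i - W) 0 ≤ ∑ i, z i * (E i * (1 - W)) := hQb
          _ = (1 - W) * W := hkW _
          _ ≤ W * (η/2) := by
              have := mul_le_mul_of_nonneg_right (show (1:ℝ) - W ≤ η/2 by linarith) hWpos.le
              linarith
    -- per-coordinate bound
    have hbound : ∀ i, max (z i - z' i) 0 ≤ (z i * max (W - E i) 0 + z i * (1/τ)) / D := by
      intro i
      have hrhs0 : 0 ≤ (z i * max (W - E i) 0 + z i * (1/τ)) / D :=
        div_nonneg (add_nonneg (mul_nonneg (hz0 i) (le_max_right _ _))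
          (mul_nonneg (hz0 i) hτ0.le)) hDpos.le
      apply max_le _ hrhs0
      have heq : z i - z' i = (z i * D - (E i * z i + c)) / D := by
        rw [hz']
        field_simp
      rw [heq]
      apply (div_le_div_iff_of_pos_right hDpos).2
      have h1 : z i * (W - E i) ≤ z i * max (W - E i) 0 :=
        mul_le_mul_of_nonneg_left (le_max_left _ _) (hz0 i)
      have h2 : z i * D = z i * W + z i * (1/τ) := by rw [hDW]; ring
      linarith
    calc ∑ i, max (z i - z' i) 0
        ≤ ∑ i, (z i * max (W - E i) 0 + z i * (1/τ)) / D :=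
          Finset.sum_le_sum fun i _ => hbound i
      _ = (P + 1/τ) / D := by
          rw [← Finset.sum_div, Finset.sum_add_distrib, ← hPdef, ← Finset.sum_mul, hz1, one_mul]
      _ ≤ η := by
          rw [hDW, div_le_iff₀ (by positivity)]
          have k1 := mul_nonneg (sub_nonneg.2 hτ2) (show (0:ℝ) ≤ 1 - η by linarith)
          have k2 := mul_nonneg hη.le (sub_nonneg.2 hW1η)
          nlinarith [k1, k2, hP]
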